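/- arXiv:0911.4183 — 3 statements merged into one kernel-verified Lean document; each statement's English description precedes it below -/
import Mathlib

section
/- Let C be an abelian category, L a localizing (Serre, hereditary torsion) subcategory of the module category Mod(G) over a small preadditive category G, and F : Mod(G) → A an additive functor into a cocomplete abelian category such that F annihilates all objects of L and preserves exactness of short exact sequences whose third term lies in L. Then for every object A of A, the right adjoint value F_*(A) = A ↦ (G ↦ Hom_A(F(G), A)) is an L-closed module, i.e. Hom_G(L, F_*A) = 0 and Ext^1_G(L, F_*A) = 0 for all L ∈ L. -/
/-! Factor `f : M ⟶ N` through its coimage as `f = π ≫ m`. The epimorphism `π` is the cokernel of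
`kernel.ι f`, and `Fe` preserves cokernels and kills `kernel f ∈ L`, so `Fe.map π` is invertible;
the monomorphism `m` has the same cokernel as `f`, so `Fe.map m` is invertible by hypothesis.
Thus `Fe.map f` is an isomorphism, and precomposition with `f` on maps into `Fr.obj a` is, through
the adjunction, precomposition with `Fe.map f` on maps into `a`. -/

open CategoryTheory CategoryTheory.Limits Opposite

universe w' w v' u' v u

namespace Paper

abbrev ModC (G : Type u) [SmallCategory G] [Preadditive G] := Gᵒᵖ ⥤ AddCommGrpCat.{u}

variable {G : Type u} [SmallCategory G] [Preadditive G]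

def res {U : Type u} [SmallCategory U] [Preadditive U] (S : U ⥤ G) : ModC G ⥤ ModC U :=
  (Functor.whiskeringLeft Uᵒᵖ Gᵒᵖ AddCommGrpCat.{u}).obj S.op

def resT {C : Type u'} [Category.{u} C] [Preadditive C] (T : G ⥤ C) : C ⥤ ModC G :=
  preadditiveYoneda ⋙ (Functor.whiskeringLeft Gᵒᵖ Cᵒᵖ AddCommGrpCat.{u}).obj T.op

structure IsLocalizing (L : ModC G → Prop) : Prop where
  zero : ∀ X : ModC G, IsZero X → L X
  closed_sub : ∀ ⦃X Y : ModC G⦄ (f : X ⟶ Y), Mono f → L Y → L X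
  closed_quot : ∀ ⦃X Y : ModC G⦄ (f : X ⟶ Y), Epi f → L X → L Y
  closed_ext : ∀ ⦃X Y : ModC G⦄ (f : X ⟶ Y), Mono f → L X → L (cokernel f) → L Y
  closed_coprod : ∀ {ι : Type u} (X : ι → ModC G), (∀ i, L (X i)) → L (∐ X)

def LClosed (L : ModC G → Prop) (X : ModC G) : Prop :=
  ∀ ⦃M N : ModC G⦄ (f : M ⟶ N), L (kernel f) → L (cokernel f) →
    Function.Bijective (fun g : N ⟶ X => f ≫ g)

def AnnPres (L : ModC G → Prop) {A : Type u'} [Category.{v'} A] (Fe : ModC G ⥤ A) : Prop :=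
  (∀ X : ModC G, L X → IsZero (Fe.obj X)) ∧
  ∀ ⦃M N : ModC G⦄ (f : M ⟶ N), Mono f → L (cokernel f) → IsIso (Fe.map f)

def IsExtensionOf {A : Type u'} [Category.{v'} A] (F : G ⥤ A) (Fe : ModC G ⥤ A) : Prop :=
  Nonempty (PreservesColimitsOfSize.{u, u} Fe) ∧ Nonempty (preadditiveYoneda ⋙ Fe ≅ F)

def GenClosed {A : Type u'} [Category.{v'} A] (L : ModC G → Prop) (F : G ⥤ A) : Prop :=
  ∃ Fe : ModC G ⥤ A, IsExtensionOf F Fe ∧ AnnPres L Fe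

def CondEpi {U : Type u} [SmallCategory U] [Preadditive U] (S : U ⥤ G)
    (L : ModC G → Prop) : Prop :=
  ∀ (A : Type u') [Category.{v'} A] [Abelian A] [HasColimitsOfSize.{v', v'} A]
    (F F' : G ⥤ A), F.Additive → F'.Additive → GenClosed L F → S ⋙ F = S ⋙ F' → F = F'

def RingsEpi {U : Type u} [SmallCategory U] [Preadditive U] (S : U ⥤ G) : Prop :=
  ∀ (G' : Type u) [SmallCategory G'] [Preadditive G'] (F F' : G ⥤ G'),
    F.Additive → F'.Additive → S ⋙ F = S ⋙ F' → F = F'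

def Generates {U : Type u} [SmallCategory U] {C : Type u'} [Category.{v'} C] (T : U ⥤ C) : Prop :=
  ∀ ⦃X Y : C⦄ (f g : X ⟶ Y), (∀ (u : U) (h : T.obj u ⟶ X), h ≫ f = h ≫ g) → f = g

end Paper

namespace CategoryTheory

theorem Limits.isIso_map_coequalizer_π_of_map_eq {C : Type*} {D : Type*} [Category C]
    [Category D] (F : C ⥤ D) {X Y : C} (g h : X ⟶ Y) [HasCoequalizer g h]
    [PreservesColimit (parallelPair g h) F] (hgh : F.map g = F.map h) :
    IsIso (F.map (coequalizer.π g h)) :=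
  isIso_colimit_cocone_parallelPair_of_eq hgh (isColimitOfHasCoequalizerOfPreservesColimit F g h)

theorem Adjunction.bijective_comp_of_isIso_map {C : Type*} {D : Type*} [Category C] [Category D]
    {F : C ⥤ D} {R : D ⥤ C} (adj : F ⊣ R) {M N : C} (f : M ⟶ N) [IsIso (F.map f)] (a : D) :
    Function.Bijective (fun g : N ⟶ R.obj a => f ≫ g) := by
  have : (fun g : N ⟶ R.obj a => f ≫ g) =
      adj.homEquiv M a ∘ (asIso (F.map f)).symm.homFromEquiv ∘ (adj.homEquiv N a).symm := by
    funext g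
    simp [Adjunction.homEquiv_naturality_left]
  rw [this]
  exact (adj.homEquiv M a).bijective.comp
    ((asIso (F.map f)).symm.homFromEquiv.bijective.comp (adj.homEquiv N a).symm.bijective)

end CategoryTheory

namespace Paper

theorem AnnPres.isIso_map_of_kernel_cokernel {G : Type u} [SmallCategory G] [Preadditive G]
    {L : ModC G → Prop} (hL : IsLocalizing L)
    {A : Type u'} [Category.{v'} A] {Fe : ModC G ⥤ A} (hAnn : AnnPres L Fe)
    [PreservesColimitsOfShape WalkingParallelPair Fe] {M N : ModC G} (f : M ⟶ N)
    (hker : L (kernel f)) (hcoker : L (cokernel f)) : IsIso (Fe.map f) := by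
  have hcoim : L (cokernel (Abelian.factorThruCoimage f)) :=
    hL.closed_sub ((cokernelEpiComp (Abelian.coimage.π f) (Abelian.factorThruCoimage f)).symm ≪≫
      cokernelIsoOfEq (Abelian.coimage.fac f)).hom inferInstance hcoker
  have : IsIso (Fe.map (Abelian.factorThruCoimage f)) := hAnn.2 _ inferInstance hcoim
  have : IsIso (Fe.map (Abelian.coimage.π f)) :=
    isIso_map_coequalizer_π_of_map_eq Fe (kernel.ι f) 0 ((hAnn.1 _ hker).eq_of_src _ _)
  rw [← Abelian.coimage.fac f, Fe.map_comp]
  infer_instance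

theorem stmt0_general {G : Type u} [SmallCategory G] [Preadditive G]
    (L : ModC G → Prop) (hL : IsLocalizing L)
    {A : Type u'} [Category.{v'} A]
    (Fe : ModC G ⥤ A)
    (hcolim : PreservesColimitsOfSize.{u, u} Fe)
    (hAnn : AnnPres L Fe)
    (Fr : A ⥤ ModC G) (adj : Fe ⊣ Fr) :
    ∀ a : A, LClosed L (Fr.obj a) := by
  intro a M N f hker hcoker
  have : PreservesColimitsOfSize.{0, 0} Fe := preservesColimitsOfSize_shrink.{0, u, 0, u} Fe
  have : IsIso (Fe.map f) := hAnn.isIso_map_of_kernel_cokernel hL f hker hcoker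
  exact adj.bijective_comp_of_isIso_map f a

theorem stmt0 {G : Type u} [SmallCategory G] [Preadditive G]
    (L : ModC G → Prop) (hL : IsLocalizing L)
    {A : Type u'} [Category.{v'} A] [Abelian A] [HasColimitsOfSize.{v', v'} A]
    (Fe : ModC G ⥤ A) (hadd : Fe.Additive)
    (hcolim : PreservesColimitsOfSize.{u, u} Fe)
    (hAnn : AnnPres L Fe)
    (Fr : A ⥤ ModC G) (adj : Fe ⊣ Fr) :
    ∀ a : A, LClosed L (Fr.obj a) :=
  stmt0_general L hL Fe hcolim hAnn Fr adj

end Paper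
end

section
/- Let F : G → A be an additive functor from a small preadditive category G to a cocomplete abelian category A, and L a localizing subcategory of Mod(G) with quotient functor Q and right adjoint R. If F is generalized L-closed (so that F^* ≅ F^⋆ ∘ Q and F_* ≅ R ∘ F_⋆), then F^⋆ is left adjoint to F_⋆. -/
open CategoryTheory CategoryTheory.Limits Opposite

universe w' w v' u' v u

namespace CategoryTheory.Adjunction

variable {C : Type u} [Category.{v} C] {D : Type w} [Category.{w'} D]
  {E : Type u'} [Category.{v'} E]

/-- Since `R` is fully faithful, the counit `R ⋙ Q ≅ 𝟭` is an isomorphism, so `Q ⋙ F ⊣ G ⋙ R`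
restricts along `R` to `F ⊣ G`. -/
noncomputable def ofCompOfReflective {Q : C ⥤ D} {R : D ⥤ C} (adjQR : Q ⊣ R) [R.Full] [R.Faithful]
    {F : D ⥤ E} {G : E ⥤ D} (adj : Q ⋙ F ⊣ G ⋙ R) : F ⊣ G :=
  adj.restrictFullyFaithful (.ofFullyFaithful R) (.id E)
    ((Functor.associator R Q F).symm ≪≫ Functor.isoWhiskerRight (asIso adjQR.counit) F ≪≫
      F.leftUnitor ≪≫ F.rightUnitor.symm)
    (Functor.leftUnitor (G ⋙ R))

end CategoryTheory.Adjunction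

namespace Paper

theorem stmt2_general {G : Type u} [SmallCategory G] [Preadditive G]
    {C : Type w} [Category.{w'} C]
    (Q : ModC G ⥤ C) (R : C ⥤ ModC G) (adjQR : Q ⊣ R)
    (hRfull : R.Full) (hRfaithful : R.Faithful)
    {A : Type u'} [Category.{v'} A]
    (Fe : ModC G ⥤ A)
    (Fr : A ⥤ ModC G) (adjF : Fe ⊣ Fr)
    (Fs : C ⥤ A) (e1 : Fe ≅ Q ⋙ Fs)
    (Fk : A ⥤ C) (e2 : Fr ≅ Fk ⋙ R) :
    Nonempty (Fs ⊣ Fk) :=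
  have := hRfull
  have := hRfaithful
  ⟨adjQR.ofCompOfReflective ((adjF.ofNatIsoLeft e1).ofNatIsoRight e2)⟩

theorem stmt2 {G : Type u} [SmallCategory G] [Preadditive G]
    (L : ModC G → Prop) (hL : IsLocalizing L)
    {C : Type w} [Category.{w'} C]
    (Q : ModC G ⥤ C) (R : C ⥤ ModC G) (adjQR : Q ⊣ R)
    (hRfull : R.Full) (hRfaithful : R.Faithful) (hQexact : PreservesFiniteLimits Q)
    (hker : ∀ X : ModC G, L X ↔ IsZero (Q.obj X))
    {A : Type u'} [Category.{v'} A] [Abelian A] [HasColimitsOfSize.{v', v'} A]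
    (F : G ⥤ A) (hF : F.Additive)
    (Fe : ModC G ⥤ A) (hext : IsExtensionOf F Fe) (hgen : AnnPres L Fe)
    (Fr : A ⥤ ModC G) (adjF : Fe ⊣ Fr)
    (Fs : C ⥤ A) (e1 : Fe ≅ Q ⋙ Fs)
    (Fk : A ⥤ C) (e2 : Fr ≅ Fk ⋙ R) :
    Nonempty (Fs ⊣ Fk) :=
  stmt2_general Q R adjQR hRfull hRfaithful Fe Fr adjF Fs e1 Fk e2

end Paper
end

section
/- Let I : G → V be a morphism of rings with several objects such that the induced adjoint pair (I^*, I_*) between Mod(G) and Mod(V) is a localization (I^* exact, I_* fully faithful). Then I^* and I_* are mutually inverse equivalences of categories if and only if every representable module G(−,G), G ∈ G, is (Ker I^*)-closed. -/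
open CategoryTheory CategoryTheory.Limits Opposite

universe w' w v' u' v u

/-!
An equivalence annihilates no nonzero module, so every module is closed. Conversely, since `I_*`
is fully faithful, `I^*` inverts every unit `η_X : X → I_* I^* X`; as `I^*` is exact, the kernel
and cokernel of `η_X` are annihilated by `I^*`. Every `I_* Y` is closed by adjunction, so when `X`
is closed too, the retraction of `η_X` given by the closedness of `X` is also a section. For the
representables this identifies `G(-, G)` with `V(I -, I G)`, i.e. `I` is fully faithful, and then
`I^*` is the left Kan extension along a fully faithful functor, whose unit is invertible.
-/

namespace CategoryTheory

variable {C D : Type*} [Category C] [Category D]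

lemma bijective_precomp_of_isIso {X Y : C} (f : X ⟶ Y) [IsIso f] (Z : C) :
    Function.Bijective (fun g : Y ⟶ Z => f ≫ g) :=
  (asIso f).symm.homFromEquiv.bijective

lemma isIso_of_bijective_precomp {X Y : C} (f : X ⟶ Y)
    (hX : Function.Surjective (fun g : Y ⟶ X => f ≫ g))
    (hY : Function.Injective (fun g : Y ⟶ Y => f ≫ g)) : IsIso f := by
  obtain ⟨r, hr⟩ := hX (𝟙 X)
  have hr : f ≫ r = 𝟙 X := hr
  exact ⟨r, hr, hY (show f ≫ r ≫ f = f ≫ 𝟙 Y by rw [reassoc_of% hr, Category.comp_id])⟩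

lemma Adjunction.bijective_precomp_of_isIso_map {F : C ⥤ D} {R : D ⥤ C} (adj : F ⊣ R)
    {M N : C} (f : M ⟶ N) [IsIso (F.map f)] (Y : D) :
    Function.Bijective (fun g : N ⟶ R.obj Y => f ≫ g) := by
  have hcomp : (fun g : N ⟶ R.obj Y => f ≫ g) =
      adj.homEquiv M Y ∘ (fun h => F.map f ≫ h) ∘ (adj.homEquiv N Y).symm := by
    funext g
    simp [← adj.homEquiv_naturality_left_symm]
  rw [hcomp]
  exact (adj.homEquiv M Y).bijective.comp
    ((bijective_precomp_of_isIso _ _).comp (adj.homEquiv N Y).symm.bijective)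

lemma Functor.map_bijective_of_bijective_map_comp_app (F : C ⥤ D) (e : F ⟶ F)
    (he : ∀ X Y, Function.Bijective (fun h : X ⟶ Y => F.map h ≫ e.app Y)) (X Y : C) :
    Function.Bijective (F.map : (X ⟶ Y) → (F.obj X ⟶ F.obj Y)) := by
  obtain ⟨a, ha⟩ := (he Y Y).2 (𝟙 (F.obj Y))
  have ha : F.map a ≫ e.app Y = 𝟙 _ := ha
  have : IsIso (e.app Y) := ⟨F.map a, by rw [← e.naturality, ha], ha⟩
  have hcomp : (F.map : (X ⟶ Y) → _) =
      (asIso (e.app Y)).homToEquiv.symm ∘ (fun h : X ⟶ Y => F.map h ≫ e.app Y) := by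
    funext h
    simp
  rw [hcomp]
  exact (asIso (e.app Y)).homToEquiv.symm.bijective.comp (he X Y)

lemma Functor.isIso_map_iff_isZero_kernel_and_cokernel [Abelian C] [Abelian D] (F : C ⥤ D)
    [PreservesFiniteLimits F] [PreservesFiniteColimits F] {X Y : C} (f : X ⟶ Y) :
    IsIso (F.map f) ↔ IsZero (F.obj (Limits.kernel f)) ∧ IsZero (F.obj (cokernel f)) := by
  rw [isIso_iff_mono_and_epi, Preadditive.mono_iff_isZero_kernel,
    Preadditive.epi_iff_isZero_cokernel, ← (PreservesKernel.iso F f).isZero_iff,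
    ← (PreservesCokernel.iso F f).isZero_iff]

end CategoryTheory

namespace Paper

variable {G V : Type u} [SmallCategory G] [Preadditive G] [SmallCategory V] [Preadditive V]

lemma lClosed_of_forall_isZero {L : ModC G → Prop} (hL : ∀ X, L X → IsZero X) (X : ModC G) :
    LClosed L X := by
  intro M N f hk hc
  have : IsIso f := by
    rw [isIso_iff_mono_and_epi, Preadditive.mono_iff_isZero_kernel,
      Preadditive.epi_iff_isZero_cokernel]
    exact ⟨hL _ hk, hL _ hc⟩
  exact bijective_precomp_of_isIso f X

lemma isZero_res_obj (I : G ⥤ V) {Y : ModC V} (hY : IsZero Y) : IsZero ((res I).obj Y) := by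
  rw [Functor.isZero_iff] at hY ⊢
  exact fun X => hY _

lemma nonempty_fullyFaithful_of_iso (I : G ⥤ V)
    (θ : preadditiveYoneda ≅ I ⋙ preadditiveYoneda ⋙ res I) : Nonempty I.FullyFaithful := by
  have app_apply {g g' : G} (h : g' ⟶ g) :
      (θ.hom.app g).app (op g') h = I.map h ≫ (θ.hom.app g).app (op g) (𝟙 g) := by
    have := NatTrans.naturality_apply (θ.hom.app g) h.op (𝟙 g)
    change (θ.hom.app g).app (op g') (h ≫ 𝟙 g) = _ at this
    rwa [Category.comp_id] at this
  let e : I ⟶ I :=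
    { app g := (θ.hom.app g).app (op g) (𝟙 g)
      naturality {g g₂} h := by
        have := ConcreteCategory.congr_hom (NatTrans.congr_app (θ.hom.naturality h) (op g)) (𝟙 g)
        change (θ.hom.app g₂).app (op g) (𝟙 g ≫ h) = _ at this
        rw [Category.id_comp, app_apply] at this
        exact this }
  refine (Functor.FullyFaithful.nonempty_iff_map_bijective I).2
    (I.map_bijective_of_bijective_map_comp_app e fun g' g => ?_)
  have hcomp : (fun h : g' ⟶ g => I.map h ≫ e.app g) = (θ.hom.app g).app (op g') :=
    funext fun h => (app_apply h).symm
  exact hcomp ▸ ConcreteCategory.bijective_of_isIso ((θ.hom.app g).app (op g'))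

section Localization

variable (I : G ⥤ V) {Iind : ModC G ⥤ ModC V}

lemma lClosed_res_obj (adj : Iind ⊣ res I) [PreservesFiniteLimits Iind] (Y : ModC V) :
    LClosed (fun X => IsZero (Iind.obj X)) ((res I).obj Y) := by
  intro M N f hk hc
  have : PreservesColimitsOfSize.{0, 0} Iind := adj.leftAdjoint_preservesColimits
  have := (Iind.isIso_map_iff_isZero_kernel_and_cokernel f).2 ⟨hk, hc⟩
  exact adj.bijective_precomp_of_isIso_map f Y

lemma isIso_unit_app_of_lClosed (adj : Iind ⊣ res I) [PreservesFiniteLimits Iind]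
    [(res I).Full] [(res I).Faithful] {X : ModC G}
    (hX : LClosed (fun X => IsZero (Iind.obj X)) X) : IsIso (adj.unit.app X) := by
  have : PreservesColimitsOfSize.{0, 0} Iind := adj.leftAdjoint_preservesColimits
  obtain ⟨hk, hc⟩ :=
    (Iind.isIso_map_iff_isZero_kernel_and_cokernel (adj.unit.app X)).1 inferInstance
  exact isIso_of_bijective_precomp _ (hX _ hk hc).2 (lClosed_res_obj I adj _ _ hk hc).1

lemma isIso_unit_of_full_of_faithful (adj : Iind ⊣ res I) [I.Full] [I.Faithful] :
    IsIso adj.unit := by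
  let lanAdj := I.op.lanAdjunction AddCommGrpCat.{u}
  have hlan := lanAdj.fullyFaithfulLOfIsIsoUnit
  have := hlan.full
  have := hlan.faithful
  have := Functor.Full.of_iso (adj.leftAdjointUniq lanAdj).symm
  have := Functor.Faithful.of_iso (adj.leftAdjointUniq lanAdj).symm
  infer_instance

end Localization

theorem stmt16_general {G V : Type u} [SmallCategory G] [Preadditive G]
    [SmallCategory V] [Preadditive V]
    (I : G ⥤ V)
    (Iind : ModC G ⥤ ModC V) (adj : Iind ⊣ res I)
    (hext : Nonempty (preadditiveYoneda ⋙ Iind ≅ I ⋙ preadditiveYoneda))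
    (hexact : PreservesFiniteLimits Iind)
    (hfull : (res I).Full) (hfaithful : (res I).Faithful) :
    (Nonempty (Iind ⋙ res I ≅ 𝟭 (ModC G)) ∧ Nonempty (res I ⋙ Iind ≅ 𝟭 (ModC V))) ↔
      ∀ g : G, LClosed (fun X => IsZero (Iind.obj X)) (preadditiveYoneda.obj g) := by
  constructor
  · rintro ⟨⟨e⟩, -⟩ g
    refine lClosed_of_forall_isZero (fun X hX => ?_) _
    exact (isZero_res_obj I hX).of_iso (e.app X).symm
  · intro hclosed
    obtain ⟨φ⟩ := hext
    have : ∀ g, IsIso ((preadditiveYoneda.whiskerLeft adj.unit).app g) :=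
      fun g => isIso_unit_app_of_lClosed I adj (hclosed g)
    have : IsIso (preadditiveYoneda.whiskerLeft adj.unit) := NatIso.isIso_of_isIso_app _
    obtain ⟨hI⟩ := nonempty_fullyFaithful_of_iso I
      (asIso (preadditiveYoneda.whiskerLeft adj.unit) ≪≫ Functor.isoWhiskerRight φ (res I))
    have := hI.full
    have := hI.faithful
    have := isIso_unit_of_full_of_faithful I adj
    exact ⟨⟨(asIso adj.unit).symm⟩, ⟨asIso adj.counit⟩⟩

theorem stmt16 {G V : Type u} [SmallCategory G] [Preadditive G]
    [SmallCategory V] [Preadditive V]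
    (I : G ⥤ V) (hI : I.Additive)
    (Iind : ModC G ⥤ ModC V) (adj : Iind ⊣ res I)
    (hext : Nonempty (preadditiveYoneda ⋙ Iind ≅ I ⋙ preadditiveYoneda))
    (hexact : PreservesFiniteLimits Iind)
    (hfull : (res I).Full) (hfaithful : (res I).Faithful) :
    (Nonempty (Iind ⋙ res I ≅ 𝟭 (ModC G)) ∧ Nonempty (res I ⋙ Iind ≅ 𝟭 (ModC V))) ↔
      ∀ g : G, LClosed (fun X => IsZero (Iind.obj X)) (preadditiveYoneda.obj g) :=
  stmt16_general I Iind adj hext hexact hfull hfaithful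

end Paper
end
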